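/- arXiv:1307.2163 — 2 statements merged into one kernel-verified Lean document; each statement's English description precedes it below -/
import Mathlib

section
/- A geodesic path in DL_d(q) has at most one turn in each tree T_i: if a path has two or more turns in some tree, it is not a geodesic. -/
/-!
Let `b₁`, `b₂` be the bottom vertices in `T_i` of the two turns. An automorphism of `T_i` that
fixes every vertex of height `≤ h` may swap any two children of a vertex of height `h`; applied to
the `i`-th coordinate along a stretch of the path whose ends have height `≤ h`, it yields a path of
the same length with the same endpoints. If `b₂` is not higher than `b₁`, apply this between the
first turn and `b₂` so that the first turn leaves `b₁` through the edge it came in by; otherwise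
apply it between `b₁` and the second turn so that the second turn enters `b₂` through the edge it
leaves by. Either way the replacement lemma shortens the new path.
-/

/-- A vertex of the (q+1)-regular tree with a distinguished end, in the
horocyclic model: a height `k ∈ ℤ` together with a finitely supported
labelling of the levels strictly below `k`. -/
structure TreeVert (q : ℕ) where
  height : ℤ
  labels : ℤ → ℕ
  labels_lt : ∀ n, labels n = 0 ∨ labels n < q
  supp_below : ∀ n, height ≤ n → labels n = 0
  fin_supp : (Function.support labels).Finite

namespace DL

variable {q d : ℕ}

/-- `v` is a child of `u` (one step further from the distinguished end). -/
abbrev treeAdjUp (u v : TreeVert q) : Prop :=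
  v.height = u.height + 1 ∧ ∀ n, n ≠ u.height → v.labels n = u.labels n

/-- The (q+1)-regular tree. -/
def TreeGraph (q : ℕ) : SimpleGraph (TreeVert q) where
  Adj u v := treeAdjUp u v ∨ treeAdjUp v u
  symm := ⟨fun u v h => Or.symm h⟩
  loopless := by
    constructor
    intro u h
    rcases h with ⟨h1, _⟩ | ⟨h1, _⟩ <;> omega

/-- The base vertex of the tree. -/
def treeOrigin (q : ℕ) : TreeVert q :=
  ⟨0, fun _ => 0, fun _ => Or.inl rfl, fun _ _ => rfl, by simp⟩

/-- Vertices of the Diestel–Leader graph `DL_d(q)`: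
`d`-tuples of tree vertices whose heights sum to zero. -/
def DLVert (d q : ℕ) : Type :=
  {x : Fin d → TreeVert q // (∑ i, (x i).height) = 0}

/-- The Diestel–Leader graph `DL_d(q)`: an edge ascends in one tree and
descends in another, all other coordinates being fixed. -/
def DLGraph (d q : ℕ) : SimpleGraph (DLVert d q) where
  Adj v w := ∃ i j : Fin d, i ≠ j ∧ treeAdjUp (v.1 i) (w.1 i) ∧ treeAdjUp (w.1 j) (v.1 j) ∧
      ∀ k : Fin d, k ≠ i → k ≠ j → v.1 k = w.1 k
  symm := by
    constructor
    rintro v w ⟨i, j, hij, h1, h2, h3⟩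
    exact ⟨j, i, hij.symm, h2, h1, fun k hk1 hk2 => (h3 k hk2 hk1).symm⟩
  loopless := by
    constructor
    rintro v ⟨i, j, hij, ⟨h1, _⟩, _⟩
    omega

/-- The base point of `DL_d(q)`. -/
def origin (d q : ℕ) : DLVert d q :=
  ⟨fun _ => treeOrigin q, by simp [treeOrigin]⟩

/-- A geodesic ray in `DL_d(q)` : an isometric embedding of `ℕ`. -/
def IsGeodesicRay (γ : ℕ → DLVert d q) : Prop :=
  ∀ m n : ℕ, m ≤ n → (DLGraph d q).dist (γ m) (γ n) = n - m

/-- Two rays are asymptotic when they stay at uniformly bounded distance. -/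
def Asymptotic (γ γ' : ℕ → DLVert d q) : Prop :=
  ∃ C : ℕ, ∀ n : ℕ, (DLGraph d q).dist (γ n) (γ' n) ≤ C

instance : TopologicalSpace (DLVert d q) := ⊥

/-- Geodesic rays emanating from the origin, with the topology of uniform
convergence on compact sets (= pointwise convergence, the vertex set being
discrete). -/
def RaySpace (d q : ℕ) : Type :=
  {γ : ℕ → DLVert d q // IsGeodesicRay γ ∧ γ 0 = origin d q}

instance : TopologicalSpace (RaySpace d q) := by
  unfold RaySpace; infer_instance

lemma reachable_origin (γ : RaySpace d q) (n : ℕ) :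
    (DLGraph d q).Reachable (origin d q) (γ.1 n) := by
  cases n with
  | zero => rw [γ.2.2]
  | succ n =>
    have h := γ.2.1 0 (n + 1) (Nat.zero_le _)
    have hne : (DLGraph d q).dist (γ.1 0) (γ.1 (n + 1)) ≠ 0 := by
      rw [h]; omega
    have := SimpleGraph.Reachable.of_dist_ne_zero hne
    rwa [γ.2.2] at this

/-- Asymptoticity as an equivalence relation on geodesic rays from the origin. -/
def asympSetoid (d q : ℕ) : Setoid (RaySpace d q) where
  r γ γ' := Asymptotic γ.1 γ'.1
  iseqv := by
    constructor
    · intro γ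
      exact ⟨0, fun n => by simp [SimpleGraph.dist_self]⟩
    · rintro γ γ' ⟨C, hC⟩
      exact ⟨C, fun n => by rw [SimpleGraph.dist_comm]; exact hC n⟩
    · rintro a b c ⟨C1, h1⟩ ⟨C2, h2⟩
      refine ⟨C1 + C2, fun n => ?_⟩
      have hab : (DLGraph d q).Reachable (a.1 n) (b.1 n) :=
        (reachable_origin a n).symm.trans (reachable_origin b n)
      have hbc : (DLGraph d q).Reachable (b.1 n) (c.1 n) :=
        (reachable_origin b n).symm.trans (reachable_origin c n)
      obtain ⟨p, hp⟩ := hab.exists_walk_length_eq_dist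
      obtain ⟨p', hp'⟩ := hbc.exists_walk_length_eq_dist
      calc (DLGraph d q).dist (a.1 n) (c.1 n) ≤ (p.append p').length :=
            SimpleGraph.dist_le _
        _ = (DLGraph d q).dist (a.1 n) (b.1 n) + (DLGraph d q).dist (b.1 n) (c.1 n) := by
            rw [SimpleGraph.Walk.length_append, hp, hp']
        _ ≤ C1 + C2 := Nat.add_le_add (h1 n) (h2 n)

/-- The visual boundary of `DL_d(q)`: asymptotic classes of geodesic rays
from the origin, with the quotient topology. -/
def Boundary (d q : ℕ) : Type := Quotient (asympSetoid d q)

instance : TopologicalSpace (Boundary d q) := by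
  unfold Boundary; infer_instance

/-- A ray in `DL_2(q)` descends for exactly `n` steps in tree `i`
(bottoming out at height `-n`), then ascends forever in tree `i`.
For `n = 0` this says the ray ascends forever in tree `i` with no turn. -/
def DescendsExactly (i : Fin 2) (n : ℕ) (γ : ℕ → DLVert 2 q) : Prop :=
  (∀ t : ℕ, t ≤ n → ((γ t).1 i).height = -(t : ℤ)) ∧
  (∀ t : ℕ, n ≤ t → ((γ t).1 i).height = (t : ℤ) - 2 * n)

/-- The subset `C_n^i` of the boundary: classes of rays bottoming out in
tree `i` after descending exactly `n` edges. -/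
def Cset (q : ℕ) (i : Fin 2) (n : ℕ) : Set (Boundary 2 q) :=
  {x | ∃ γ : RaySpace 2 q, Quotient.mk (asympSetoid 2 q) γ = x ∧ DescendsExactly i n γ.1}

/-- Projection of a path in `DL_d(q)` to the `i`-th tree. -/
def proj (i : Fin d) (γ : ℕ → DLVert d q) : ℕ → TreeVert q := fun n => (γ n).1 i

/-- Two (lazy) paths in the tree converge to the same end: both eventually
leave every ball, and they come within a uniformly bounded distance of each
other at arbitrarily late times. -/
def SameEnd (a b : ℕ → TreeVert q) : Prop :=
  (∀ R : ℕ, ∃ N : ℕ, ∀ n, N ≤ n → R ≤ (TreeGraph q).dist (a 0) (a n)) ∧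
  (∀ R : ℕ, ∃ N : ℕ, ∀ n, N ≤ n → R ≤ (TreeGraph q).dist (b 0) (b n)) ∧
  (∃ C : ℕ, ∀ N : ℕ, ∃ m n, N ≤ m ∧ N ≤ n ∧ (TreeGraph q).dist (a m) (b n) ≤ C)

/-- The step from `p m` to `p (m+1)` descends in tree `i`. -/
def StepDown (i : Fin d) (p : ℕ → DLVert d q) (m : ℕ) : Prop :=
  treeAdjUp ((p (m + 1)).1 i) ((p m).1 i)

/-- The step from `p m` to `p (m+1)` ascends in tree `i`. -/
def StepUp (i : Fin d) (p : ℕ → DLVert d q) (m : ℕ) : Prop :=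
  treeAdjUp ((p m).1 i) ((p (m + 1)).1 i)

/-- A turn in tree `i`: a subpath beginning with a descent in `T_i` at step `t`,
ending with an ascent in `T_i` at step `s`, with no intervening step
involving `T_i`. -/
def IsTurn (i : Fin d) (p : ℕ → DLVert d q) (t s : ℕ) : Prop :=
  t < s ∧ StepDown i p t ∧ StepUp i p s ∧
    ∀ m, t < m → m < s → (p (m + 1)).1 i = (p m).1 i

lemma TreeVert.ext {x y : TreeVert q} (hh : x.height = y.height) (hl : x.labels = y.labels) :
    x = y := by
  cases x; cases y; cases hh; cases hl; rfl

lemma treeAdjUp_left_unique {x x' y : TreeVert q} (h : treeAdjUp x y) (h' : treeAdjUp x' y) :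
    x = x' := by
  have hh : x.height = x'.height := by linarith [h.1, h'.1]
  refine TreeVert.ext hh (funext fun n => ?_)
  by_cases hn : n = x.height
  · rw [x.supp_below n hn.ge, x'.supp_below n (hh ▸ hn).ge]
  · rw [← h.2 n hn, h'.2 n (hh ▸ hn)]

lemma exists_treeAdjUp_parent (x : TreeVert q) : ∃ y, treeAdjUp y x := by
  refine ⟨⟨x.height - 1, Function.update x.labels (x.height - 1) 0, fun n => ?_, fun n hn => ?_,
    (x.fin_supp.insert (x.height - 1)).subset fun n hn => ?_⟩, by simp, fun n hn => ?_⟩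
  · rw [Function.update_apply]; split_ifs
    exacts [Or.inl rfl, x.labels_lt n]
  · rw [Function.update_apply]; split_ifs
    exacts [rfl, x.supp_below n (by omega)]
  · rw [Function.mem_support, Function.update_apply] at hn
    split_ifs at hn with h
    exacts [absurd rfl hn, Or.inr hn]
  · exact (Function.update_of_ne hn _ _).symm

/-- The label at level `h` of a vertex above level `h` records through which child of its
ancestor at height `h` it passes, so exchanging two label values there is a tree automorphism
fixing everything at height `≤ h`. -/
def swapLabelsAt (h : ℤ) (l l' : ℕ) (hl : l = 0 ∨ l < q) (hl' : l' = 0 ∨ l' < q)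
    (x : TreeVert q) : TreeVert q :=
  if hx : h < x.height then
    { height := x.height
      labels := Function.update x.labels h (Equiv.swap l l' (x.labels h))
      labels_lt := fun n => by
        rw [Function.update_apply, Equiv.swap_apply_def]
        split_ifs
        exacts [hl', hl, x.labels_lt h, x.labels_lt n]
      supp_below := fun n hn => by
        rw [Function.update_of_ne (by omega)]; exact x.supp_below n hn
      fin_supp := (x.fin_supp.insert h).subset fun n hn => by
        rw [Function.mem_support, Function.update_apply] at hn
        split_ifs at hn with hnh
        exacts [Or.inl hnh, Or.inr hn] }
  else x

section swapLabelsAt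

variable {h : ℤ} {l l' : ℕ} {hl : l = 0 ∨ l < q} {hl' : l' = 0 ∨ l' < q}

lemma swapLabelsAt_of_height_le {x : TreeVert q} (hx : x.height ≤ h) :
    swapLabelsAt h l l' hl hl' x = x := by
  rw [swapLabelsAt, dif_neg (not_lt.2 hx)]

lemma height_swapLabelsAt (x : TreeVert q) : (swapLabelsAt h l l' hl hl' x).height = x.height := by
  unfold swapLabelsAt; split <;> rfl

lemma labels_swapLabelsAt {x : TreeVert q} (hx : h < x.height) :
    (swapLabelsAt h l l' hl hl' x).labels =
      Function.update x.labels h (Equiv.swap l l' (x.labels h)) := by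
  rw [swapLabelsAt, dif_pos hx]

lemma treeAdjUp_swapLabelsAt {x y : TreeVert q} (hxy : treeAdjUp x y) :
    treeAdjUp (swapLabelsAt h l l' hl hl' x) (swapLabelsAt h l l' hl hl' y) := by
  refine ⟨by simp only [height_swapLabelsAt, hxy.1], fun n hn => ?_⟩
  rw [height_swapLabelsAt] at hn
  rcases lt_trichotomy h x.height with hlt | heq | hgt
  · rw [labels_swapLabelsAt hlt, labels_swapLabelsAt (by omega), Function.update_apply,
      Function.update_apply, hxy.2 h hlt.ne, hxy.2 n hn]
  · rw [swapLabelsAt_of_height_le heq.ge, labels_swapLabelsAt (by omega),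
      Function.update_of_ne (heq ▸ hn), hxy.2 n hn]
  · rw [swapLabelsAt_of_height_le hgt.le, swapLabelsAt_of_height_le (by omega), hxy.2 n hn]

end swapLabelsAt

lemma exists_treeAdjUp_hom_map_sibling {e x y : TreeVert q} (hx : treeAdjUp e x)
    (hy : treeAdjUp e y) :
    ∃ σ : TreeVert q → TreeVert q, (∀ z, (σ z).height = z.height) ∧
      (∀ z w, treeAdjUp z w → treeAdjUp (σ z) (σ w)) ∧
      (∀ z, z.height ≤ e.height → σ z = z) ∧ σ x = y := by
  have hex : e.height < x.height := by omega
  refine ⟨swapLabelsAt e.height (x.labels e.height) (y.labels e.height) (x.labels_lt _)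
    (y.labels_lt _), height_swapLabelsAt, fun _ _ => treeAdjUp_swapLabelsAt,
    fun _ => swapLabelsAt_of_height_le, TreeVert.ext ?_ ?_⟩
  · rw [height_swapLabelsAt, hx.1, hy.1]
  · rw [labels_swapLabelsAt hex, Equiv.swap_apply_left]
    funext n
    rw [Function.update_apply]
    split_ifs with hn
    · rw [hn]
    · rw [hx.2 n hn, hy.2 n hn]

lemma sum_height_update (f : Fin d → TreeVert q) (a : Fin d) (x : TreeVert q) :
    ∑ k, (Function.update f a x k).height = ∑ k, (f k).height - (f a).height + x.height := by
  have key : ∀ k, (Function.update f a x k).height =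
      Function.update (fun k => (f k).height) a x.height k := fun k => by
    rw [Function.update_apply, Function.update_apply]; split_ifs <;> rfl
  simp only [key, Finset.sum_update_of_mem (Finset.mem_univ a),
    ← Finset.sum_erase_add _ _ (Finset.mem_univ a), Finset.sdiff_singleton_eq_erase]
  ring

structure AdjVia (a b : Fin d) (v w : DLVert d q) : Prop where
  ne : a ≠ b
  up : treeAdjUp (v.1 a) (w.1 a)
  down : treeAdjUp (w.1 b) (v.1 b)
  eq : ∀ k, k ≠ a → k ≠ b → v.1 k = w.1 k

lemma adj_iff_exists_adjVia {v w : DLVert d q} :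
    (DLGraph d q).Adj v w ↔ ∃ a b, AdjVia a b v w :=
  ⟨fun ⟨a, b, hab, hu, hd, he⟩ => ⟨a, b, hab, hu, hd, he⟩,
    fun ⟨a, b, hab, hu, hd, he⟩ => ⟨a, b, hab, hu, hd, he⟩⟩

lemma AdjVia.adj {a b : Fin d} {v w : DLVert d q} (h : AdjVia a b v w) : (DLGraph d q).Adj v w :=
  adj_iff_exists_adjVia.2 ⟨a, b, h⟩

lemma AdjVia.symm {a b : Fin d} {v w : DLVert d q} (h : AdjVia a b v w) : AdjVia b a w v :=
  ⟨h.ne.symm, h.down, h.up, fun k hb ha => (h.eq k ha hb).symm⟩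

lemma DLVert.exists_adjVia (v : DLVert d q) {a b : Fin d} (hab : a ≠ b) {xa xb : TreeVert q}
    (ha : treeAdjUp (v.1 a) xa) (hb : treeAdjUp xb (v.1 b)) :
    ∃ w, AdjVia a b v w ∧ w.1 a = xa ∧ w.1 b = xb := by
  let w : DLVert d q := ⟨Function.update (Function.update v.1 a xa) b xb, by
    rw [sum_height_update, sum_height_update, v.2, Function.update_of_ne hab.symm, ha.1]
    linarith [hb.1]⟩
  have hwa : w.1 a = xa := by
    simp only [w, Function.update_of_ne hab, Function.update_self]
  have hwb : w.1 b = xb := Function.update_self ..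
  refine ⟨w, ⟨hab, hwa ▸ ha, hwb ▸ hb, fun k ha hb => ?_⟩, hwa, hwb⟩
  simp only [w, Function.update_of_ne ha, Function.update_of_ne hb]

lemma exists_adjVia_of_treeAdjUp_down {v w : DLVert d q} {i : Fin d} (h : (DLGraph d q).Adj v w)
    (hi : treeAdjUp (w.1 i) (v.1 i)) : ∃ T, AdjVia T i v w := by
  obtain ⟨a, b, hab⟩ := adj_iff_exists_adjVia.1 h
  by_cases hbi : b = i
  · exact ⟨a, hbi ▸ hab⟩
  · by_cases hai : a = i
    · subst hai; have := hab.up.1; have := hi.1; omega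
    · have := hab.eq i (Ne.symm hai) (Ne.symm hbi) ▸ hi.1; omega

lemma exists_adjVia_of_treeAdjUp_up {v w : DLVert d q} {i : Fin d} (h : (DLGraph d q).Adj v w)
    (hi : treeAdjUp (v.1 i) (w.1 i)) : ∃ S, AdjVia i S v w :=
  (exists_adjVia_of_treeAdjUp_down h.symm hi).imp fun _ h => h.symm

lemma exists_adjVia_of_apply_eq {v w : DLVert d q} {i : Fin d} (h : (DLGraph d q).Adj v w)
    (hi : v.1 i = w.1 i) : ∃ a b, a ≠ i ∧ b ≠ i ∧ AdjVia a b v w := by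
  obtain ⟨a, b, hab⟩ := adj_iff_exists_adjVia.1 h
  refine ⟨a, b, fun hai => ?_, fun hbi => ?_, hab⟩
  · have := hai ▸ hab.up.1; rw [hi] at this; omega
  · have := hbi ▸ hab.down.1; rw [hi] at this; omega

section Retrace

variable {i T : Fin d} {x y z : DLVert d q}

lemma eq_or_adjVia_of_retrace {S : Fin d} (hxy : AdjVia T i x y) (hyz : AdjVia i S y z)
    (hret : z.1 i = x.1 i) : x = z ∨ AdjVia T S x z := by
  have hTi : T ≠ i := hxy.ne
  have hSi : S ≠ i := hyz.ne.symm
  have hxz : ∀ k, k ≠ T → k ≠ S → x.1 k = z.1 k := fun k hT hS => by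
    by_cases hki : k = i
    · exact hki ▸ hret.symm
    · rw [hxy.eq k hT hki, hyz.eq k hki hS]
  by_cases hST : S = T
  · subst hST
    refine Or.inl (Subtype.ext (funext fun k => ?_))
    by_cases hkS : k = S
    · exact hkS ▸ treeAdjUp_left_unique hxy.up hyz.down
    · by_cases hki : k = i
      · exact hki ▸ hret.symm
      · exact hxz k hkS hkS
  · refine Or.inr ⟨Ne.symm hST, ?_, ?_, hxz⟩
    · rw [← hyz.eq T hTi (Ne.symm hST)]; exact hxy.up
    · rw [hxy.eq S hST hSi]; exact hyz.down

lemma AdjVia.trans_cancel {a : Fin d} (hxy : AdjVia T i x y) (hyz : AdjVia a T y z)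
    (hai : a ≠ i) : AdjVia a i x z := by
  have haT : a ≠ T := hyz.ne
  refine ⟨hai, ?_, ?_, fun k ha hi => ?_⟩
  · rw [hxy.eq a haT hai]; exact hyz.up
  · rw [← hyz.eq i (Ne.symm hai) (Ne.symm hxy.ne)]; exact hxy.down
  · by_cases hkT : k = T
    · exact hkT ▸ treeAdjUp_left_unique hxy.up hyz.down
    · rw [hxy.eq k hkT hi, hyz.eq k ha hkT]

/-- The ascent in `T` of the step `x → y` can be postponed past a step that neither moves tree `i`
nor undoes it. -/
lemma AdjVia.exists_commute {a b : Fin d} (hxy : AdjVia T i x y) (hyz : AdjVia a b y z)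
    (hai : a ≠ i) (hbi : b ≠ i) (hbT : b ≠ T) :
    ∃ x', x'.1 i = x.1 i ∧ AdjVia a b x x' ∧ AdjVia T i x' z := by
  have hTi : T ≠ i := hxy.ne
  obtain ⟨P, hP⟩ := exists_treeAdjUp_parent (z.1 T)
  have hzi : treeAdjUp (z.1 i) (x.1 i) := by
    rw [← hyz.eq i (Ne.symm hai) (Ne.symm hbi)]; exact hxy.down
  obtain ⟨x', hzx', hx'i, hx'T⟩ := z.exists_adjVia (Ne.symm hTi) hzi hP
  have hx' := hzx'.symm
  refine ⟨x', hx'i, ⟨hyz.ne, ?_, ?_, fun k hka hkb => ?_⟩, hx'⟩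
  · by_cases haT : a = T
    · subst haT
      rw [hx'T, treeAdjUp_left_unique hP hyz.up]; exact hxy.up
    · rw [hxy.eq a haT hai, ← hzx'.eq a hai haT]; exact hyz.up
  · rw [hxy.eq b hbT hbi, ← hzx'.eq b hbi hbT]; exact hyz.down
  · by_cases hki : k = i
    · exact hki ▸ hx'i.symm
    · by_cases hkT : k = T
      · subst hkT
        have hyzT : y.1 k = z.1 k := hyz.eq k hka hkb
        rw [hx'T]
        exact treeAdjUp_left_unique hxy.up (hyzT ▸ hP)
      · rw [hxy.eq k hkT hki, hyz.eq k hka hkb, hzx'.eq k hki hkT]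

end Retrace

/-- The replacement lemma. The ascent made by the first step is postponed along the flat stretch
until it cancels against a descent or against the final step. -/
lemma edist_le_of_retrace {i T S : Fin d} {x z : DLVert d q} (p : ℕ → DLVert d q) {t s : ℕ}
    (hts : t < s) (hpath : ∀ m, t < m → m < s → (DLGraph d q).Adj (p m) (p (m + 1)))
    (hflat : ∀ m, t < m → m < s → (p (m + 1)).1 i = (p m).1 i)
    (hx : AdjVia T i x (p (t + 1))) (hz : AdjVia i S (p s) z) (hret : z.1 i = x.1 i) :
    (DLGraph d q).edist x z ≤ (s - t : ℕ) := by
  obtain ⟨k, hk⟩ : ∃ k, s = t + 1 + k := ⟨s - t - 1, by omega⟩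
  induction k generalizing t x T with
  | zero =>
    obtain rfl : s = t + 1 := hk
    rcases eq_or_adjVia_of_retrace hx hz hret with rfl | hxz
    · simp
    · simpa using SimpleGraph.edist_le_one_iff_adj_or_eq.2 (Or.inl hxz.adj)
  | succ k ih =>
    have ih' {x' : DLVert d q} {T' : Fin d} (hx' : AdjVia T' i x' (p (t + 1 + 1)))
        (hret' : z.1 i = x'.1 i) : (DLGraph d q).edist x' z ≤ (s - (t + 1) : ℕ) :=
      ih (by omega) (fun m h1 => hpath m (by omega)) (fun m h1 => hflat m (by omega)) hx' hret'
        (by omega)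
    obtain ⟨a, b, hai, hbi, hstep⟩ := exists_adjVia_of_apply_eq
      (hpath (t + 1) (by omega) (by omega)) (hflat (t + 1) (by omega) (by omega)).symm
    by_cases hbT : b = T
    · subst hbT
      exact (ih' (hx.trans_cancel hstep hai) hret).trans (by gcongr; omega)
    · obtain ⟨x', hx'i, hxx', hx'⟩ := hx.exists_commute hstep hai hbi hbT
      calc (DLGraph d q).edist x z
          ≤ (DLGraph d q).edist x x' + (DLGraph d q).edist x' z := SimpleGraph.edist_triangle
        _ ≤ (1 : ℕ) + (s - (t + 1) : ℕ) :=
          add_le_add (by simpa using SimpleGraph.edist_le_one_iff_adj_or_eq.2 (Or.inl hxx'.adj))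
            (ih' hx' (hret.trans hx'i.symm))
        _ = (s - t : ℕ) := by rw [← Nat.cast_add]; congr 1; omega

def mapCoord (i : Fin d) (σ : TreeVert q → TreeVert q) (hσ : ∀ x, (σ x).height = x.height)
    (v : DLVert d q) : DLVert d q :=
  ⟨Function.update v.1 i (σ (v.1 i)), by rw [sum_height_update, v.2, hσ]; ring⟩

section mapCoord

variable {i : Fin d} {σ : TreeVert q → TreeVert q} {hσ : ∀ x, (σ x).height = x.height}

lemma mapCoord_apply (v : DLVert d q) (k : Fin d) :
    (mapCoord i σ hσ v).1 k = if k = i then σ (v.1 k) else v.1 k := by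
  show Function.update v.1 i (σ (v.1 i)) k = _
  rw [Function.update_apply]; split_ifs with h
  · rw [h]
  · rfl

lemma mapCoord_eq_self {v : DLVert d q} (h : σ (v.1 i) = v.1 i) : mapCoord i σ hσ v = v :=
  Subtype.ext (by simp [mapCoord, h])

lemma adj_mapCoord (hσa : ∀ x y, treeAdjUp x y → treeAdjUp (σ x) (σ y)) {v w : DLVert d q}
    (h : (DLGraph d q).Adj v w) : (DLGraph d q).Adj (mapCoord i σ hσ v) (mapCoord i σ hσ w) := by
  obtain ⟨a, b, hab⟩ := adj_iff_exists_adjVia.1 h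
  refine AdjVia.adj (a := a) (b := b) ⟨hab.ne, ?_, ?_, fun k ha hb => ?_⟩ <;>
    simp only [mapCoord_apply] <;> split_ifs
  exacts [hσa _ _ hab.up, hab.up, hσa _ _ hab.down, hab.down, congrArg σ (hab.eq k ha hb),
    hab.eq k ha hb]

end mapCoord

lemma IsTurn.apply_eq {i : Fin d} {p : ℕ → DLVert d q} {t s : ℕ} (h : IsTurn i p t s) {m : ℕ}
    (htm : t < m) (hms : m ≤ s) : (p m).1 i = (p (t + 1)).1 i := by
  induction m, htm using Nat.le_induction with
  | base => rfl
  | succ m htm ih => rw [h.2.2.2 m htm (by omega), ih (by omega)]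

end DL

namespace SimpleGraph

variable {V : Type*} {G : SimpleGraph V}

lemma edist_le_of_adj_succ (p : ℕ → V) {a b : ℕ} (hab : a ≤ b)
    (h : ∀ m, a ≤ m → m < b → G.Adj (p m) (p (m + 1))) : G.edist (p a) (p b) ≤ (b - a : ℕ) := by
  induction b, hab using Nat.le_induction with
  | base => simp
  | succ b hab ih =>
    calc G.edist (p a) (p (b + 1)) ≤ G.edist (p a) (p b) + G.edist (p b) (p (b + 1)) :=
          G.edist_triangle
      _ ≤ (b - a : ℕ) + (1 : ℕ) :=
          add_le_add (ih fun m h1 h2 => h m h1 (by omega))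
            (by simpa using (edist_eq_one_iff_adj.2 (h b hab (by omega))).le)
      _ = (b + 1 - a : ℕ) := by rw [← Nat.cast_add]; congr 1; omega

lemma dist_lt_of_edist_le (p : ℕ → V) {n a b c : ℕ}
    (hpath : ∀ m, m < n → G.Adj (p m) (p (m + 1))) (hcab : c + a < b) (hbn : b ≤ n)
    (h : G.edist (p a) (p b) ≤ c) : G.dist (p 0) (p n) < n := by
  have hle : G.edist (p 0) (p n) ≤ (a + c + (n - b) : ℕ) :=
    calc G.edist (p 0) (p n) ≤ G.edist (p 0) (p a) + G.edist (p a) (p b) + G.edist (p b) (p n) :=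
          G.edist_triangle.trans (add_le_add_left G.edist_triangle _)
      _ ≤ a + c + (n - b : ℕ) := by
          gcongr
          · simpa using edist_le_of_adj_succ p (Nat.zero_le a) fun m _ hm => hpath m (by omega)
          · exact edist_le_of_adj_succ p hbn fun m _ hm => hpath m hm
      _ = (a + c + (n - b) : ℕ) := by push_cast; rfl
  exact (ENat.toNat_le_of_le_natCast hle).trans_lt (by omega)

end SimpleGraph

namespace DL

variable {q d : ℕ}

section Turns

variable {i : Fin d} {p : ℕ → DLVert d q} {t s : ℕ}

/-- Relabel the rest of the path by an automorphism of `T_i` fixing everything up to the height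
of the bottom vertex of the turn, so that the turn leaves it through the edge it arrived by. -/
lemma edist_le_of_isTurn_of_height_le_after (hturn : IsTurn i p t s) {r : ℕ} (hsr : s < r)
    (hpath : ∀ m, t ≤ m → m < r → (DLGraph d q).Adj (p m) (p (m + 1)))
    (hr : ((p r).1 i).height ≤ ((p (t + 1)).1 i).height) :
    (DLGraph d q).edist (p t) (p r) ≤ (r - t - 1 : ℕ) := by
  have hbot := hturn.apply_eq hturn.1 le_rfl
  obtain ⟨hts, hdown, hup, hflat⟩ := hturn
  obtain ⟨σ, hσh, hσa, hσfix, hσ⟩ :=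
    exists_treeAdjUp_hom_map_sibling (hbot ▸ hup : treeAdjUp _ ((p (s + 1)).1 i)) hdown
  have hΦs : mapCoord i σ hσh (p s) = p s := mapCoord_eq_self (hσfix _ (by rw [hbot]))
  have hΦr : mapCoord i σ hσh (p r) = p r := mapCoord_eq_self (hσfix _ hr)
  obtain ⟨T, hx⟩ := exists_adjVia_of_treeAdjUp_down (hpath t le_rfl (by omega)) hdown
  obtain ⟨S, hz⟩ := exists_adjVia_of_treeAdjUp_up (i := i)
    (hΦs ▸ adj_mapCoord hσa (hpath s (by omega) hsr) : (DLGraph d q).Adj (p s) _)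
    (by rw [mapCoord_apply, if_pos rfl, hσ, hbot]; exact hdown)
  have hretrace := edist_le_of_retrace p hts (fun m h1 h2 => hpath m h1.le (by omega)) hflat hx hz
    (by rw [mapCoord_apply, if_pos rfl, hσ])
  have hrest := SimpleGraph.edist_le_of_adj_succ (fun m => mapCoord i σ hσh (p m)) hsr
    fun m h1 h2 => adj_mapCoord hσa (hpath m (by omega) h2)
  simp only [hΦr] at hrest
  calc (DLGraph d q).edist (p t) (p r)
      ≤ (DLGraph d q).edist (p t) _ + (DLGraph d q).edist _ (p r) := SimpleGraph.edist_triangle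
    _ ≤ (s - t : ℕ) + (r - (s + 1) : ℕ) := add_le_add hretrace hrest
    _ = (r - t - 1 : ℕ) := by rw [← Nat.cast_add]; congr 1; omega

/-- The mirror image of `edist_le_of_isTurn_of_height_le_after`: relabel the path before the turn
so that the turn enters its bottom vertex through the edge it leaves by. -/
lemma edist_le_of_isTurn_of_height_le_before (hturn : IsTurn i p t s) {r : ℕ} (hrt : r ≤ t)
    (hpath : ∀ m, r ≤ m → m ≤ s → (DLGraph d q).Adj (p m) (p (m + 1)))
    (hr : ((p r).1 i).height ≤ ((p (t + 1)).1 i).height) :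
    (DLGraph d q).edist (p r) (p (s + 1)) ≤ (s - r : ℕ) := by
  have hbot := hturn.apply_eq hturn.1 le_rfl
  obtain ⟨hts, hdown, hup, hflat⟩ := hturn
  obtain ⟨σ, hσh, hσa, hσfix, hσ⟩ :=
    exists_treeAdjUp_hom_map_sibling hdown (hbot ▸ hup : treeAdjUp _ ((p (s + 1)).1 i))
  have hΦr : mapCoord i σ hσh (p r) = p r := mapCoord_eq_self (hσfix _ hr)
  have hΦt : mapCoord i σ hσh (p (t + 1)) = p (t + 1) := mapCoord_eq_self (hσfix _ le_rfl)
  obtain ⟨T, hx⟩ := exists_adjVia_of_treeAdjUp_down (i := i)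
    (hΦt ▸ adj_mapCoord hσa (hpath t hrt hts.le) : (DLGraph d q).Adj _ (p (t + 1)))
    (by rw [mapCoord_apply, if_pos rfl, hσ, ← hbot]; exact hup)
  obtain ⟨S, hz⟩ := exists_adjVia_of_treeAdjUp_up (hpath s (by omega) le_rfl) hup
  have hretrace := edist_le_of_retrace p hts (fun m h1 h2 => hpath m (by omega) h2.le) hflat hx hz
    (by rw [mapCoord_apply, if_pos rfl, hσ])
  have hinit := SimpleGraph.edist_le_of_adj_succ (fun m => mapCoord i σ hσh (p m)) hrt
    fun m h1 h2 => adj_mapCoord hσa (hpath m h1 (by omega))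
  simp only [hΦr] at hinit
  calc (DLGraph d q).edist (p r) (p (s + 1))
      ≤ (DLGraph d q).edist (p r) _ + (DLGraph d q).edist _ (p (s + 1)) :=
        SimpleGraph.edist_triangle
    _ ≤ (t - r : ℕ) + (s - t : ℕ) := add_le_add hinit hretrace
    _ = (s - r : ℕ) := by rw [← Nat.cast_add]; congr 1; omega

end Turns

theorem not_geodesic_of_two_turns_general {d q : ℕ}
    (p : ℕ → DLVert d q) (n : ℕ)
    (hpath : ∀ m : ℕ, m < n → (DLGraph d q).Adj (p m) (p (m + 1)))
    (i : Fin d) (t₁ s₁ t₂ s₂ : ℕ)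
    (h1 : IsTurn i p t₁ s₁) (h2 : IsTurn i p t₂ s₂)
    (hsep : s₁ < t₂) (hs₂ : s₂ < n) :
    (DLGraph d q).dist (p 0) (p n) < n := by
  have ht₁ := h1.1
  have ht₂ := h2.1
  rcases le_total ((p (t₂ + 1)).1 i).height ((p (t₁ + 1)).1 i).height with hle | hle
  · exact SimpleGraph.dist_lt_of_edist_le p hpath (a := t₁) (b := t₂ + 1) (by omega) (by omega)
      (edist_le_of_isTurn_of_height_le_after h1 (by omega) (fun m _ hm => hpath m (by omega)) hle)
  · exact SimpleGraph.dist_lt_of_edist_le p hpath (a := t₁ + 1) (b := s₂ + 1) (by omega)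
      (by omega)
      (edist_le_of_isTurn_of_height_le_before h2 (by omega) (fun m _ hm => hpath m (by omega)) hle)

/-- a geodesic in `DL_d(q)` has at most one turn in each tree: a
path with two turns in some tree `T_i` is not geodesic. -/
theorem not_geodesic_of_two_turns {d q : ℕ} (hq : 2 ≤ q) (hd : 2 ≤ d)
    (p : ℕ → DLVert d q) (n : ℕ)
    (hpath : ∀ m : ℕ, m < n → (DLGraph d q).Adj (p m) (p (m + 1)))
    (i : Fin d) (t₁ s₁ t₂ s₂ : ℕ)
    (h1 : IsTurn i p t₁ s₁) (h2 : IsTurn i p t₂ s₂)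
    (hsep : s₁ < t₂) (hs₂ : s₂ < n) :
    (DLGraph d q).dist (p 0) (p n) < n :=
  not_geodesic_of_two_turns_general p n hpath i t₁ s₁ t₂ s₂ h1 h2 hsep hs₂

end DL
end

section
/- For any geodesic ray γ in DL_d(q) and any 0 ≤ i < d, the projection γ^(i) to tree T_i converges to at most one end of T_i, and if γ^(i) traverses only finitely many edges then γ^(i) is eventually constant. -/
namespace DL

variable {q d : ℕ}

/-!
A geodesic ray cannot, at arbitrarily late times, ascend in `T_i` and descend in `T_i` later
on. Otherwise two such disjoint peaks would descend in the same tree `T_j` at their start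
(pigeonhole). The lowest point of `T_j` before the end of the second peak lies outside one of
them, and for that peak one can skip the ascent in `T_i` and, at its end, descend in `T_j`
rather than in `T_i`: `T_i` then runs one level lower and `T_j` one level higher in between,
no label that must be kept gets overwritten, and the ray would have a shortcut. So the height
in `T_i` is eventually monotone, and if the projection moves infinitely often, its height, and
with it its distance from the start, tends to infinity.
-/

lemma finite_support_update {ι M : Type*} [Zero M] [DecidableEq ι] {f : ι → M}
    (hf : f.support.Finite) (x : ι) (y : M) : (Function.update f x y).support.Finite := by
  classical
  rw [Function.support_update_eq_ite]
  split_ifs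
  exacts [hf.sdiff, hf.insert x]

section PiSingle

variable {ι : Type*} [DecidableEq ι]

lemma single_sub_single_apply_eq_one_iff {a b k : ι} (hab : a ≠ b) :
    (Pi.single a 1 - Pi.single b 1 : ι → ℤ) k = 1 ↔ k = a := by
  rcases eq_or_ne k a with rfl | hka <;> rcases eq_or_ne k b with rfl | hkb <;> simp_all

lemma single_sub_single_apply_eq_neg_one_iff {a b k : ι} (hab : a ≠ b) :
    (Pi.single a 1 - Pi.single b 1 : ι → ℤ) k = -1 ↔ k = b := by
  rcases eq_or_ne k a with rfl | hka <;> rcases eq_or_ne k b with rfl | hkb <;> simp_all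

lemma abs_single_sub_single_apply_le_one (a b k : ι) :
    |(Pi.single a 1 - Pi.single b 1 : ι → ℤ) k| ≤ 1 := by
  simp only [Pi.sub_apply, Pi.single_apply]
  split_ifs <;> simp

end PiSingle

section IntegerSequences

open Filter

lemma exists_forall_ge_eq_of_finite {α : Type*} {f : ℕ → α}
    (hf : {m | f (m + 1) ≠ f m}.Finite) : ∃ N, ∀ n ≥ N, f n = f N := by
  obtain ⟨B, hB⟩ := hf.bddAbove
  refine ⟨B + 1, fun n hn => ?_⟩
  induction n, hn using Nat.le_induction with
  | base => rfl
  | succ n hn ih =>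
    by_contra hne
    have := hB (show f (n + 1) ≠ f n from fun h => hne (h.trans ih))
    omega

lemma tendsto_atTop_of_le_succ {h : ℕ → ℤ} {σ : ℕ} (hmono : ∀ m ≥ σ, h m ≤ h (m + 1))
    (hinf : {m | h (m + 1) ≠ h m}.Infinite) : Tendsto h atTop atTop := by
  have hmono' {a b : ℕ} (ha : σ ≤ a) (hab : a ≤ b) : h a ≤ h b := by
    induction b, hab using Nat.le_induction with
    | base => rfl
    | succ b hb ih => exact ih.trans (hmono b (ha.trans hb))
  have hclimb (j : ℕ) : ∃ N ≥ σ, h σ + j ≤ h N := by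
    induction j with
    | zero => exact ⟨σ, le_rfl, by simp⟩
    | succ j ih =>
      obtain ⟨N, hN, hj⟩ := ih
      obtain ⟨m, hm, hNm⟩ := hinf.exists_gt N
      have := lt_of_le_of_ne (hmono m (by omega)) (Ne.symm hm)
      have := hmono' hN hNm.le
      exact ⟨m + 1, by omega, by push_cast; omega⟩
  refine tendsto_atTop_atTop.2 fun b => ?_
  obtain ⟨N, hN, hb⟩ := hclimb (b - h σ).toNat
  exact ⟨N, fun n hn => by have := hmono' hN hn; omega⟩

lemma tendsto_atTop_or_atBot_of_eventually_not_rise_fall {h : ℕ → ℤ}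
    (hpeak : ∀ᶠ a in atTop, ∀ b, a < b → ¬(h a < h (a + 1) ∧ h (b + 1) < h b))
    (hinf : {m | h (m + 1) ≠ h m}.Infinite) : Tendsto h atTop atTop ∨ Tendsto h atTop atBot := by
  obtain ⟨T, hT⟩ := eventually_atTop.1 hpeak
  by_cases hrise : ∃ σ ≥ T, h σ < h (σ + 1)
  · obtain ⟨σ, hσT, hσ⟩ := hrise
    refine Or.inl (tendsto_atTop_of_le_succ (σ := σ) (fun m hm => ?_) hinf)
    rcases hm.eq_or_lt with rfl | hlt
    · exact hσ.le
    · exact not_lt.1 fun hfall => hT σ hσT m hlt ⟨hσ, hfall⟩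
  · push Not at hrise
    refine Or.inr (tendsto_neg_atTop_iff.1 (tendsto_atTop_of_le_succ (σ := T)
      (fun m hm => neg_le_neg (hrise m hm)) ?_))
    simpa only [ne_eq, neg_inj] using hinf

end IntegerSequences

section LazyPath

open Finset

variable {V : Type*}

def IsLazyPath (G : SimpleGraph V) (c : ℕ → V) : Prop :=
  ∀ m, c (m + 1) = c m ∨ G.Adj (c m) (c (m + 1))

variable {G : SimpleGraph V} {c : ℕ → V}

lemma IsLazyPath.exists_walk [DecidableEq V] (hc : IsLazyPath G c) (n : ℕ) :
    ∃ w : G.Walk (c 0) (c n), w.length = #{m ∈ range n | c (m + 1) ≠ c m} := by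
  induction n with
  | zero => exact ⟨.nil, rfl⟩
  | succ n ih =>
    obtain ⟨w, hw⟩ := ih
    rw [range_add_one, filter_insert]
    rcases hc n with heq | hadj
    · exact ⟨w.copy rfl heq.symm, by simp [heq, hw]⟩
    · refine ⟨w.concat hadj, ?_⟩
      rw [if_pos hadj.ne', card_insert_of_notMem (by simp), SimpleGraph.Walk.length_concat, hw]

lemma IsLazyPath.reachable (hc : IsLazyPath G c) (n : ℕ) : G.Reachable (c 0) (c n) := by
  classical
  exact ⟨(hc.exists_walk n).choose⟩

lemma IsLazyPath.dist_le [DecidableEq V] (hc : IsLazyPath G c) (n : ℕ) :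
    G.dist (c 0) (c n) ≤ #{m ∈ range n | c (m + 1) ≠ c m} := by
  obtain ⟨w, hw⟩ := hc.exists_walk n
  exact hw ▸ SimpleGraph.dist_le w

end LazyPath

theorem _root_.TreeVert.ext {u v : TreeVert q} (hh : u.height = v.height)
    (hl : u.labels = v.labels) : u = v := by
  cases u; cases v; cases hh; cases hl; rfl

def _root_.TreeVert.parent (u : TreeVert q) : TreeVert q where
  height := u.height - 1
  labels := Function.update u.labels (u.height - 1) 0
  labels_lt n := by
    rcases eq_or_ne n (u.height - 1) with rfl | h
    · simp
    · simpa [h] using u.labels_lt n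
  supp_below n hn := by
    rcases eq_or_ne n (u.height - 1) with rfl | h
    · simp
    · simpa [h] using u.supp_below n (by omega)
  fin_supp := finite_support_update u.fin_supp _ _

def _root_.TreeVert.child (u : TreeVert q) (a : ℕ) (ha : a = 0 ∨ a < q) : TreeVert q where
  height := u.height + 1
  labels := Function.update u.labels u.height a
  labels_lt n := by
    rcases eq_or_ne n u.height with rfl | h
    · simpa using ha
    · simpa [h] using u.labels_lt n
  supp_below n hn := by
    have h : n ≠ u.height := by omega
    simpa [h] using u.supp_below n (by omega)
  fin_supp := finite_support_update u.fin_supp _ _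

lemma treeAdjUp_parent (u : TreeVert q) : treeAdjUp u.parent u :=
  ⟨by simp [TreeVert.parent], fun _ hn => (Function.update_of_ne hn _ _).symm⟩

lemma treeAdjUp_child (u : TreeVert q) (a : ℕ) (ha : a = 0 ∨ a < q) :
    treeAdjUp u (u.child a ha) :=
  ⟨rfl, fun n hn => by simp [TreeVert.child, hn]⟩

/-- Ascents copy the labels of `y`, so the path ends at `y` when `x` and `y` agree below the
lowest height visited. -/
def followHeights (x y : TreeVert q) (h : ℕ → ℤ) : ℕ → TreeVert q
  | 0 => x
  | m + 1 =>
    let z := followHeights x y h m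
    if h m < h (m + 1) then z.child (y.labels z.height) (y.labels_lt _)
    else if h (m + 1) < h m then z.parent else z

section FollowHeights

variable {x y : TreeVert q} {h : ℕ → ℤ} {m : ℕ}

lemma treeAdjUp_followHeights_of_lt (hm : h m < h (m + 1)) :
    treeAdjUp (followHeights x y h m) (followHeights x y h (m + 1)) := by
  simp only [followHeights, if_pos hm]
  exact treeAdjUp_child _ _ _

lemma treeAdjUp_followHeights_of_gt (hm : h (m + 1) < h m) :
    treeAdjUp (followHeights x y h (m + 1)) (followHeights x y h m) := by
  simp only [followHeights, if_neg hm.not_gt, if_pos hm]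
  exact treeAdjUp_parent _

lemma followHeights_succ_of_eq (hm : h (m + 1) = h m) :
    followHeights x y h (m + 1) = followHeights x y h m := by
  simp [followHeights, hm]

variable (h0 : h 0 = x.height) (hstep : ∀ m, |h (m + 1) - h m| ≤ 1)
include h0 hstep

lemma height_followHeights (m : ℕ) : (followHeights x y h m).height = h m := by
  induction m with
  | zero => exact h0.symm
  | succ m ih =>
    have := abs_le.1 (hstep m)
    simp only [followHeights]
    split_ifs <;> simp [TreeVert.child, TreeVert.parent, ih] <;> omega

lemma labels_followHeights {l : ℤ} (hl : l < h m) :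
    (followHeights x y h m).labels l = if ∀ j ≤ m, l < h j then x.labels l else y.labels l := by
  induction m with
  | zero => rw [if_pos fun j hj => by rwa [Nat.le_zero.1 hj]]; rfl
  | succ m ih =>
    have hm := abs_le.1 (hstep m)
    have hz := height_followHeights h0 hstep (y := y) m
    have hcond : (∀ j ≤ m + 1, l < h j) ↔ ∀ j ≤ m, l < h j := by
      simp [Nat.le_succ_iff, or_imp, forall_and, hl]
    simp only [hcond]
    rcases lt_trichotomy (h m) (h (m + 1)) with hup | heq | hdown
    · simp only [followHeights, if_pos hup]
      rcases (show l ≤ h m by omega).eq_or_lt with rfl | hlm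
      · have hfail : ¬∀ j ≤ m, h m < h j := fun H => (H m le_rfl).false
        simp [TreeVert.child, hz, hfail]
      · simp [TreeVert.child, hz, hlm.ne, ih hlm]
    · rw [followHeights_succ_of_eq heq.symm]
      exact ih (by omega)
    · simp only [followHeights, if_neg hdown.not_gt, if_pos hdown]
      simp [TreeVert.parent, hz, (show l ≠ h m - 1 by omega), ih (show l < h m by omega)]

lemma followHeights_eq_of_labels {N : ℕ} (hN : h N = y.height)
    (hlabels : ∀ l, (∀ j ≤ N, l < h j) → x.labels l = y.labels l) :
    followHeights x y h N = y := by
  refine TreeVert.ext ((height_followHeights h0 hstep N).trans hN) (funext fun l => ?_)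
  rcases lt_or_ge l (h N) with hl | hl
  · rw [labels_followHeights h0 hstep hl]
    split_ifs with hmin
    exacts [hlabels l hmin, rfl]
  · rw [(followHeights x y h N).supp_below l (by rw [height_followHeights h0 hstep]; exact hl),
      y.supp_below l (by omega)]

end FollowHeights

lemma abs_height_sub_le_length {u v : TreeVert q} (w : (TreeGraph q).Walk u v) :
    |v.height - u.height| ≤ w.length := by
  induction w with
  | nil => simp
  | cons h _ ih =>
    rw [SimpleGraph.Walk.length_cons, abs_le] at *
    rcases h with ⟨h, -⟩ | ⟨h, -⟩ <;> push_cast <;> constructor <;> linarith [ih.1, ih.2]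

lemma abs_height_sub_le_dist {u v : TreeVert q} (h : (TreeGraph q).Reachable u v) :
    |v.height - u.height| ≤ (TreeGraph q).dist u v := by
  obtain ⟨w, hw⟩ := h.exists_walk_length_eq_dist
  exact hw ▸ abs_height_sub_le_length w

namespace IsLazyPath

variable {c : ℕ → TreeVert q} (hc : IsLazyPath (TreeGraph q) c) {m : ℕ}
include hc

lemma treeAdjUp_of_height_lt (hm : (c m).height < (c (m + 1)).height) :
    treeAdjUp (c m) (c (m + 1)) := by
  rcases hc m with heq | hup | hdown
  · rw [heq] at hm; exact absurd hm (lt_irrefl _)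
  · exact hup
  · have := hdown.1; omega

lemma treeAdjUp_of_height_gt (hm : (c (m + 1)).height < (c m).height) :
    treeAdjUp (c (m + 1)) (c m) := by
  rcases hc m with heq | hup | hdown
  · rw [heq] at hm; exact absurd hm (lt_irrefl _)
  · have := hup.1; omega
  · exact hdown

lemma height_ne_of_ne (hm : c (m + 1) ≠ c m) : (c (m + 1)).height ≠ (c m).height := by
  rcases (hc m).resolve_left hm with ⟨h, -⟩ | ⟨h, -⟩ <;> omega

lemma labels_eq_of_lt_height {l : ℤ} {n : ℕ} (hl : ∀ τ ≤ n, l < (c τ).height) :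
    (c n).labels l = (c 0).labels l := by
  induction n with
  | zero => rfl
  | succ n ih =>
    rw [← ih fun τ hτ => hl τ (by omega)]
    rcases hc n with heq | ⟨-, hup⟩ | ⟨-, hdown⟩
    · rw [heq]
    · exact hup l (hl n (by omega)).ne
    · exact (hdown l (hl (n + 1) le_rfl).ne).symm

end IsLazyPath

def heights (x : DLVert d q) : Fin d → ℤ := fun k => (x.1 k).height

lemma exists_heights_sub_of_adj {x y : DLVert d q} (hxy : (DLGraph d q).Adj x y) :
    ∃ a b, a ≠ b ∧ heights y - heights x = Pi.single a 1 - Pi.single b 1 := by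
  obtain ⟨a, b, hab, hup, hdown, hrest⟩ := hxy
  refine ⟨a, b, hab, funext fun k => ?_⟩
  rcases eq_or_ne k a with rfl | hka
  · simp [heights, hup.1, hab]
  rcases eq_or_ne k b with rfl | hkb
  · simp [heights, hdown.1, hka]
  · simp [heights, hrest k hka hkb, hka, hkb]

lemma IsLazyPath.proj {γ : ℕ → DLVert d q} (hγ : IsLazyPath (DLGraph d q) γ) (i : Fin d) :
    IsLazyPath (TreeGraph q) (proj i γ) := by
  intro m
  rcases hγ m with heq | ⟨a, b, -, hup, hdown, hrest⟩
  · exact Or.inl (congrFun (congrArg Subtype.val heq) i)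
  rcases eq_or_ne i a with rfl | hia
  · exact Or.inr (Or.inl hup)
  rcases eq_or_ne i b with rfl | hib
  · exact Or.inr (Or.inr hdown)
  · exact Or.inl (hrest i hia hib).symm

section HeightProfile

variable {H : ℕ → Fin d → ℤ}
  (hstep : ∀ m, ∃ a b, H (m + 1) - H m = Pi.single a 1 - Pi.single b 1)
include hstep

lemma abs_sub_le_one_of_step (k : Fin d) (m : ℕ) : |H (m + 1) k - H m k| ≤ 1 := by
  obtain ⟨a, b, h⟩ := hstep m
  rw [← Pi.sub_apply, h]
  exact abs_single_sub_single_apply_le_one a b k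

lemma sum_eq_sum_zero_of_step (m : ℕ) : ∑ k, H m k = ∑ k, H 0 k := by
  induction m with
  | zero => rfl
  | succ m ih =>
    obtain ⟨a, b, h⟩ := hstep m
    have := congrArg (fun f => ∑ k, f k) h
    simp only [Pi.sub_apply, Finset.sum_sub_distrib, Finset.sum_pi_single', Finset.mem_univ,
      if_true, ih, sub_self] at this
    linarith

end HeightProfile

open Finset in
/-- In `hstep`, `a = b` encodes a step at which the path stays put. -/
theorem dist_le_card_of_heights {u v : DLVert d q} {H : ℕ → Fin d → ℤ} {N : ℕ}
    (h0 : H 0 = heights u) (hN : H N = heights v)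
    (hstep : ∀ m, ∃ a b, H (m + 1) - H m = Pi.single a 1 - Pi.single b 1)
    (hlabels : ∀ k l, (∀ m ≤ N, l < H m k) → (u.1 k).labels l = (v.1 k).labels l) :
    (DLGraph d q).dist u v ≤ #{m ∈ range N | H (m + 1) ≠ H m} := by
  classical
  let p (m : ℕ) (k : Fin d) : TreeVert q := followHeights (u.1 k) (v.1 k) (H · k) m
  have hp (m : ℕ) (k : Fin d) : (p m k).height = H m k :=
    height_followHeights (by simp [h0, heights]) (abs_sub_le_one_of_step hstep k) m
  let c (m : ℕ) : DLVert d q := ⟨p m, by simp only [hp, sum_eq_sum_zero_of_step hstep, h0, heights, u.2]⟩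
  have hstay (m : ℕ) (hH : H (m + 1) = H m) : c (m + 1) = c m :=
    Subtype.ext (funext fun k =>
      show p (m + 1) k = p m k from followHeights_succ_of_eq (congrFun hH k))
  have hc : IsLazyPath (DLGraph d q) c := by
    intro m
    obtain ⟨a, b, h⟩ := hstep m
    have hk (k : Fin d) := congrFun h k
    simp only [Pi.sub_apply] at hk
    rcases eq_or_ne a b with rfl | hab
    · exact Or.inl (hstay m (funext fun k => by simpa [sub_eq_zero] using hk k))
    refine Or.inr ⟨a, b, hab, treeAdjUp_followHeights_of_lt ?_,
      treeAdjUp_followHeights_of_gt ?_, fun k hka hkb =>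
        (show p (m + 1) k = p m k from followHeights_succ_of_eq ?_).symm⟩
    · have := hk a; simp [hab] at this; omega
    · have := hk b; simp [hab.symm] at this; omega
    · have := hk k; simp [hka, hkb] at this; omega
  have hcN : c N = v := Subtype.ext (funext fun k =>
    followHeights_eq_of_labels (by simp [h0, heights]) (abs_sub_le_one_of_step hstep k) (by simp [hN, heights])
      (hlabels k))
  calc (DLGraph d q).dist u v = (DLGraph d q).dist (c 0) (c N) := by rw [hcN]; rfl
    _ ≤ #{m ∈ range N | c (m + 1) ≠ c m} := hc.dist_le N
    _ ≤ #{m ∈ range N | H (m + 1) ≠ H m} :=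
      card_le_card (monotone_filter_right _ fun m _ hc hH => hc (hstay m hH))

lemma StepUp.heights_sub_apply {γ : ℕ → DLVert d q} {i : Fin d} {m : ℕ} (h : StepUp i γ m) :
    (heights (γ (m + 1)) - heights (γ m)) i = 1 := by
  simp [heights, h.1]

lemma StepDown.heights_sub_apply {γ : ℕ → DLVert d q} {i : Fin d} {m : ℕ}
    (h : StepDown i γ m) : (heights (γ (m + 1)) - heights (γ m)) i = -1 := by
  simp [heights, h.1]

def IsPeak (i j : Fin d) (γ : ℕ → DLVert d q) (t t' : ℕ) : Prop :=
  t < t' ∧ StepUp i γ t ∧ StepDown j γ t ∧ StepDown i γ t'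

def peakShortcut (γ : ℕ → DLVert d q) (i j : Fin d) (t t' m : ℕ) : Fin d → ℤ :=
  heights (γ m) + if t < m ∧ m ≤ t' then Pi.single j 1 - Pi.single i 1 else 0

namespace IsGeodesicRay

variable {γ : ℕ → DLVert d q} (hγ : IsGeodesicRay γ)
include hγ

lemma adj (m : ℕ) : (DLGraph d q).Adj (γ m) (γ (m + 1)) := by
  rw [← SimpleGraph.dist_eq_one_iff_adj, hγ m (m + 1) (by omega)]
  omega

lemma isLazyPath : IsLazyPath (DLGraph d q) γ := fun m => Or.inr (hγ.adj m)

lemma exists_heights_sub_of_stepDown {i : Fin d} {m : ℕ} (h : StepDown i γ m) :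
    ∃ a, a ≠ i ∧ heights (γ (m + 1)) - heights (γ m) = Pi.single a 1 - Pi.single i 1 := by
  obtain ⟨a, b, hab, hm⟩ := exists_heights_sub_of_adj (hγ.adj m)
  obtain rfl : i = b := (single_sub_single_apply_eq_neg_one_iff hab).1 (hm ▸ h.heights_sub_apply)
  exact ⟨a, hab, hm⟩

lemma heights_sub_of_stepUp_of_stepDown {i j : Fin d} {m : ℕ} (hi : StepUp i γ m)
    (hj : StepDown j γ m) :
    heights (γ (m + 1)) - heights (γ m) = Pi.single i 1 - Pi.single j 1 := by
  obtain ⟨a, haj, hm⟩ := hγ.exists_heights_sub_of_stepDown hj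
  obtain rfl : i = a := (single_sub_single_apply_eq_one_iff haj).1 (hm ▸ hi.heights_sub_apply)
  exact hm

variable {i j : Fin d} {t t' : ℕ} (hpk : IsPeak i j γ t t')
include hpk

lemma peakShortcut_succ_self : peakShortcut γ i j t t' (t + 1) = peakShortcut γ i j t t' t := by
  obtain ⟨htt', hup, hdown, -⟩ := hpk
  rw [← sub_eq_zero, peakShortcut, peakShortcut, if_pos (by omega), if_neg (by omega), add_zero,
    add_sub_right_comm, hγ.heights_sub_of_stepUp_of_stepDown hup hdown]
  abel

lemma peakShortcut_step (m : ℕ) : ∃ a b, peakShortcut γ i j t t' (m + 1) -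
    peakShortcut γ i j t t' m = Pi.single a 1 - Pi.single b 1 := by
  rcases eq_or_ne m t with rfl | hmt
  · exact ⟨i, i, by rw [hγ.peakShortcut_succ_self hpk, sub_self, sub_self]⟩
  simp only [peakShortcut]
  rcases eq_or_ne m t' with rfl | hmt'
  · obtain ⟨a, -, hm⟩ := hγ.exists_heights_sub_of_stepDown hpk.2.2.2
    refine ⟨a, j, ?_⟩
    rw [if_neg (by omega), if_pos (by have := hpk.1; omega), add_zero, ← sub_sub, hm]
    abel
  · obtain ⟨a, b, -, hm⟩ := exists_heights_sub_of_adj (hγ.adj m)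
    have hIoc : (t < m + 1 ∧ m + 1 ≤ t') ↔ (t < m ∧ m ≤ t') := by omega
    exact ⟨a, b, by simp only [hIoc, add_sub_add_right_eq_sub, hm]⟩

open Finset in
/-- Otherwise `peakShortcut` would give a path from `γ 0` to `γ n` that is shorter by the
skipped step `t`: lowering `T_i` overwrites no label that must be kept, and raising `T_j`
does not either, since its lowest point up to time `n` is left untouched. -/
theorem mem_Ioc_of_isPeak {n τ : ℕ} (ht'n : t' < n) (hτn : τ ≤ n)
    (hτ : ∀ τ' ≤ n, ((γ τ).1 j).height ≤ ((γ τ').1 j).height) : τ ∈ Set.Ioc t t' := by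
  classical
  by_contra hτI
  rw [Set.mem_Ioc] at hτI
  set H := peakShortcut γ i j t t'
  have hcount : #{m ∈ range n | H (m + 1) ≠ H m} ≤ n - 1 := by
    have hsub : {m ∈ range n | H (m + 1) ≠ H m} ⊆ (range n).erase t := fun m hm => by
      simp only [mem_filter, mem_erase] at hm ⊢
      exact ⟨fun hmt => hm.2 (hmt ▸ hγ.peakShortcut_succ_self hpk), hm.1⟩
    simpa [card_erase_of_mem (mem_range.2 (hpk.1.trans ht'n))] using card_le_card hsub
  have hlabels (k : Fin d) (l : ℤ) (hl : ∀ m ≤ n, l < H m k) :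
      ((γ 0).1 k).labels l = ((γ n).1 k).labels l := by
    refine ((hγ.isLazyPath.proj k).labels_eq_of_lt_height fun m hm => ?_).symm
    show l < ((γ m).1 k).height
    rcases eq_or_ne k j with rfl | hkj
    · have hHτ := hl τ hτn
      simp only [H, peakShortcut, if_neg hτI, add_zero] at hHτ
      exact hHτ.trans_le (hτ m hm)
    · have hle : H m k ≤ ((γ m).1 k).height := by
        simp only [H, peakShortcut, Pi.add_apply]
        split_ifs <;> simp [Pi.single_apply, hkj, heights]; split_ifs <;> simp
      exact (hl m hm).trans_le hle
  have := dist_le_card_of_heights (H := H) (N := n) (by simp [H, peakShortcut])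
    (by simp [H, peakShortcut]; omega) (hγ.peakShortcut_step hpk) hlabels
  rw [hγ 0 n n.zero_le, Nat.sub_zero] at this
  omega

omit hpk in
lemma le_of_isPeak_of_isPeak {t₁ t₁' t₂ t₂' : ℕ} (h₁ : IsPeak i j γ t₁ t₁')
    (h₂ : IsPeak i j γ t₂ t₂') : t₂ ≤ t₁' := by
  by_contra! hlt
  obtain ⟨τ, hτn, hτ⟩ := (Finset.Iic (t₂' + 1)).exists_min_image
    (fun τ => ((γ τ).1 j).height) ⟨0, Finset.mem_Iic.2 (Nat.zero_le _)⟩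
  rw [Finset.mem_Iic] at hτn
  have hmin (τ' : ℕ) (hτ' : τ' ≤ t₂' + 1) := hτ τ' (Finset.mem_Iic.2 hτ')
  have h₁τ := hγ.mem_Ioc_of_isPeak h₁ (by have := h₂.1; omega) hτn hmin
  have h₂τ := hγ.mem_Ioc_of_isPeak h₂ (by omega) hτn hmin
  rw [Set.mem_Ioc] at h₁τ h₂τ
  omega

omit hpk in
open Filter in
theorem eventually_not_stepUp_stepDown (i : Fin d) :
    ∀ᶠ t in atTop, ∀ t', t < t' → ¬(StepUp i γ t ∧ StepDown i γ t') := by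
  by_contra h
  have hpk : ∃ᶠ t in atTop, ∃ j t', IsPeak i j γ t t' := (not_eventually.1 h).mono fun t ht => by
    push Not at ht
    obtain ⟨t', htt', hup, hdown'⟩ := ht
    obtain ⟨-, j, -, -, hdown, -⟩ := hγ.adj t
    exact ⟨j, t', htt', hup, hdown, hdown'⟩
  obtain ⟨j, hj⟩ := frequently_exists.1 hpk
  obtain ⟨t₁, t₁', h₁⟩ := hj.exists
  obtain ⟨t₂, ht₂, t₂', h₂⟩ := frequently_atTop.1 hj (t₁' + 1)
  have := hγ.le_of_isPeak_of_isPeak h₁ h₂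
  omega

omit hpk in
open Filter in
theorem tendsto_dist_proj (i : Fin d) (hinf : {m | proj i γ (m + 1) ≠ proj i γ m}.Infinite) :
    Tendsto (fun n => (TreeGraph q).dist (proj i γ 0) (proj i γ n)) atTop atTop := by
  have hc := hγ.isLazyPath.proj i
  set h : ℕ → ℤ := fun n => (proj i γ n).height
  have hpeak : ∀ᶠ a in atTop, ∀ b, a < b → ¬(h a < h (a + 1) ∧ h (b + 1) < h b) :=
    (hγ.eventually_not_stepUp_stepDown i).mono fun a ha b hab ⟨hup, hdown⟩ =>
      ha b hab ⟨hc.treeAdjUp_of_height_lt hup, hc.treeAdjUp_of_height_gt hdown⟩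
  have habs : Tendsto (fun n => |h n - h 0|) atTop atTop := by
    simp only [sub_eq_add_neg]
    rcases tendsto_atTop_or_atBot_of_eventually_not_rise_fall hpeak
      (hinf.mono fun m => hc.height_ne_of_ne) with htop | hbot
    · exact tendsto_abs_atTop_atTop.comp (tendsto_atTop_add_const_right _ _ htop)
    · exact tendsto_abs_atBot_atTop.comp (tendsto_atBot_add_const_right _ _ hbot)
  refine (tendsto_natCast_atTop_iff (R := ℤ)).1 (tendsto_atTop_mono (fun n => ?_) habs)
  exact abs_height_sub_le_dist (hc.reachable n)

end IsGeodesicRay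

theorem ray_projection_one_end_general {d q : ℕ}
    (γ : ℕ → DLVert d q) (hγ : IsGeodesicRay γ) (i : Fin d) :
    ((∃ N : ℕ, ∀ n : ℕ, N ≤ n → (γ n).1 i = (γ N).1 i) ∨
      (∀ R : ℕ, ∃ N : ℕ, ∀ n : ℕ, N ≤ n →
        R ≤ (TreeGraph q).dist ((γ 0).1 i) ((γ n).1 i))) ∧
    ({m : ℕ | (γ (m + 1)).1 i ≠ (γ m).1 i}.Finite →
      ∃ N : ℕ, ∀ n : ℕ, N ≤ n → (γ n).1 i = (γ N).1 i) := by
  have hconst := exists_forall_ge_eq_of_finite (f := proj i γ)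
  refine ⟨?_, hconst⟩
  by_cases hfin : {m : ℕ | (γ (m + 1)).1 i ≠ (γ m).1 i}.Finite
  · exact Or.inl (hconst hfin)
  · exact Or.inr (Filter.tendsto_atTop_atTop.1 (hγ.tendsto_dist_proj i hfin))

/-- the projection of a geodesic ray in `DL_d(q)` to a tree `T_i`
converges to at most one end: it is either eventually constant or it
eventually leaves every ball of the tree (hence converges to a single end);
and if it traverses only finitely many edges it is eventually constant. -/
theorem ray_projection_one_end {d q : ℕ} (hq : 2 ≤ q) (hd : 2 ≤ d)
    (γ : ℕ → DLVert d q) (hγ : IsGeodesicRay γ) (i : Fin d) :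
    ((∃ N : ℕ, ∀ n : ℕ, N ≤ n → (γ n).1 i = (γ N).1 i) ∨
      (∀ R : ℕ, ∃ N : ℕ, ∀ n : ℕ, N ≤ n →
        R ≤ (TreeGraph q).dist ((γ 0).1 i) ((γ n).1 i))) ∧
    ({m : ℕ | (γ (m + 1)).1 i ≠ (γ m).1 i}.Finite →
      ∃ N : ℕ, ∀ n : ℕ, N ≤ n → (γ n).1 i = (γ N).1 i) :=
  ray_projection_one_end_general γ hγ i

end DL
end
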